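/- arXiv:2210.00391 — 6 statements merged into one kernel-verified Lean document; each statement's English description precedes it below -/
import Mathlib

section
/- Let v : ℝ → ℝ be three times continuously differentiable with v''(k) ≤ −1 and v'''(k) ≤ 2 for every k, let c ∈ ℝ, and let g : ℝ → ℝ be differentiable on an open interval containing [c, c+1] with v'(g(p)) = p for all p in that interval. Then the revenue function f(p) = g(p)·(p − c) is concave on the interval [c, c+1]. -/
/-!
Writing `u p = 1 / v''(g p)` for the slope of the demand `g`, differentiating `v'(g p) = p` gives
`g' = u` and `u' = -v'''(g) u³`, so the revenue `f p = g p (p - c)` has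
`f'' = u (2 - v'''(g p) u² (p - c))`. Since `v'' ≤ -1` we have `-1 ≤ u < 0`, and since
`v''' ≤ 2` and `0 ≤ p - c ≤ 1` the bracket is nonnegative, so `f'' ≤ 0`.
-/

open Set Filter

section Revenue

variable {g h : ℝ → ℝ} {h' p c : ℝ}

theorem HasDerivAt.mul_sub_const (hh : HasDerivAt h h' p) :
    HasDerivAt (fun q => h q * (q - c)) (h' * (p - c) + h p) p := by
  simpa using hh.fun_mul ((hasDerivAt_id p).sub_const c)

theorem HasDerivAt.inv_comp_of_hasDerivAt_inv {ψ : ℝ → ℝ} {ψ' : ℝ}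
    (hψ : HasDerivAt ψ ψ' (g p)) (hg : HasDerivAt g (ψ (g p))⁻¹ p) (hψ₀ : ψ (g p) ≠ 0) :
    HasDerivAt (fun q => (ψ (g q))⁻¹) (-ψ' * (ψ (g p))⁻¹ ^ 3) p := by
  refine ((hψ.comp p hg).fun_inv hψ₀).congr_deriv ?_
  rw [Function.comp_apply]
  field_simp

theorem revenue_deriv2_nonpos {u w t : ℝ} (hu₁ : -1 ≤ u) (hu₀ : u ≤ 0) (hw : w ≤ 2)
    (ht₀ : 0 ≤ t) (ht₁ : t ≤ 1) : -w * u ^ 3 * t + 2 * u ≤ 0 := by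
  have hu2 : u ^ 2 ≤ 1 := by nlinarith
  have hbracket : w * u ^ 2 * t ≤ 2 := by
    rcases le_total w 0 with hw₀ | hw₀
    · nlinarith [mul_nonneg (sq_nonneg u) ht₀]
    · nlinarith [mul_le_mul hu2 ht₁ ht₀ zero_le_one, mul_nonneg (sq_nonneg u) ht₀]
  nlinarith

theorem concaveOn_revenue {φ : ℝ → ℝ} {s : Set ℝ} (hφ : Differentiable ℝ φ)
    (hφ' : Differentiable ℝ (deriv φ)) (hφ'_le : ∀ k, deriv φ k ≤ -1)
    (hφ''_le : ∀ k, deriv (deriv φ) k ≤ 2) (hs : IsOpen s) (hcs : Icc c (c + 1) ⊆ s)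
    (hg : ∀ p ∈ s, DifferentiableAt ℝ g p) (hinv : ∀ p ∈ s, φ (g p) = p) :
    ConcaveOn ℝ (Icc c (c + 1)) (fun p => g p * (p - c)) := by
  have hφ'_ne : ∀ k, deriv φ k ≠ 0 := fun k => by linarith [hφ'_le k]
  have hg' : ∀ p ∈ s, HasDerivAt g (deriv φ (g p))⁻¹ p := fun p hp =>
    .of_local_left_inverse (hg p hp).continuousAt (hφ _).hasDerivAt (hφ'_ne _)
      (eventually_of_mem (hs.mem_nhds hp) hinv)
  have hg'' : ∀ p ∈ s, HasDerivAt (fun q => (deriv φ (g q))⁻¹)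
      (-deriv (deriv φ) (g p) * (deriv φ (g p))⁻¹ ^ 3) p := fun p hp =>
    (hφ' _).hasDerivAt.inv_comp_of_hasDerivAt_inv (hg' p hp) (hφ'_ne _)
  have hint : interior (Icc c (c + 1)) ⊆ s := by
    rw [interior_Icc]; exact Ioo_subset_Icc_self.trans hcs
  refine concaveOn_of_hasDerivWithinAt2_nonpos (convex_Icc _ _)
    (fun p hp => ((hg p (hcs hp)).continuousAt.mul
      (continuousAt_id.sub continuousAt_const)).continuousWithinAt)
    (fun p hp => ((hg' p (hint hp)).mul_sub_const).hasDerivWithinAt)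
    (fun p hp => (((hg'' p (hint hp)).mul_sub_const).add (hg' p (hint hp))).hasDerivWithinAt) ?_
  rw [interior_Icc]
  intro p hp
  have hu₀ : (deriv φ (g p))⁻¹ ≤ 0 := inv_nonpos.mpr (by linarith [hφ'_le (g p)])
  have hu₁ : -1 ≤ (deriv φ (g p))⁻¹ := by
    rw [le_inv_of_neg (by norm_num) (by linarith [hφ'_le (g p)])]
    simpa using hφ'_le (g p)
  linarith [revenue_deriv2_nonpos hu₁ hu₀ (hφ''_le (g p)) (sub_nonneg.mpr hp.1.le)
    (by linarith [hp.2])]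

end Revenue

/-- Single-product concavity (paper's Theorem 1): if `v` is `C³` with `v'' ≤ -1` and
`v''' ≤ 2` everywhere, and `g` is a differentiable local inverse of `v'` on an open
interval containing `[c, c+1]`, then the revenue `f p = g p * (p - c)` is concave on
`[c, c+1]`. -/
theorem revenue_concave_single_product
    (v : ℝ → ℝ) (hv : ContDiff ℝ 3 v)
    (hv'' : ∀ k : ℝ, iteratedDeriv 2 v k ≤ -1)
    (hv''' : ∀ k : ℝ, iteratedDeriv 3 v k ≤ 2)
    (c : ℝ) (a b : ℝ) (ha : a < c) (hb : c + 1 < b)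
    (g : ℝ → ℝ) (hg : ∀ p ∈ Set.Ioo a b, DifferentiableAt ℝ g p)
    (hinv : ∀ p ∈ Set.Ioo a b, deriv v (g p) = p)
    (f : ℝ → ℝ) (hf : f = fun p => g p * (p - c)) :
    ConcaveOn ℝ (Set.Icc c (c + 1)) f := by
  subst hf
  have hv₁ : Differentiable ℝ (deriv v) := by
    simpa using hv.differentiable_iteratedDeriv 1 (by norm_num)
  have hv₂ : Differentiable ℝ (deriv (deriv v)) := by
    simpa [iteratedDeriv_succ] using hv.differentiable_iteratedDeriv 2 (by norm_num)
  simp only [iteratedDeriv_succ, iteratedDeriv_zero] at hv'' hv'''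
  exact concaveOn_revenue hv₁ hv₂ hv'' hv''' isOpen_Ioo (Icc_subset_Ioo ha hb) hg hinv
end

section
/- Let n, m be positive integers, let w ∈ ℝⁿ be a probability vector (wᵢ ≥ 0, Σᵢ wᵢ = 1), and let c ∈ ℝᵐ. For each consumer type i ∈ {1,…,n} and each product j ∈ {1,…,m}, let v_{ij} : ℝ → ℝ be three times continuously differentiable with v_{ij}''(k) ≤ −1 and v_{ij}'''(k) ≤ 2 for every k, and let g_{ij} : ℝ → ℝ be differentiable on an open interval containing [c_j, c_j + 1] with v_{ij}'(g_{ij}(p)) = p there. Then the total expected revenue F(p) = Σⱼ Σᵢ wᵢ · g_{ij}(p_j) · (p_j − c_j) is a concave function of p on the box Πⱼ [c_j, c_j + 1] ⊆ ℝᵐ. -/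
/-!
Each summand `p ↦ w i * g i j (p j) * (p j - c j)` depends on one coordinate only, so it suffices
that `φ q = g q * (q - c)` is concave on `[c, c + 1]`. Differentiating `v' (g q) = q` gives
`g' = 1 / v''(g)`, hence `φ'' = 2 u - (q - c) v'''(g) u³` with `u = 1 / v''(g) ∈ [-1, 0)`.
Since `v''' ≤ 2` and `0 ≤ q - c ≤ 1`, this is at most `2u - 2u³ = 2u (1 - u²) ≤ 0`.
-/

open Set Filter

theorem ConcaveOn.finset_sum {𝕜 E β ι : Type*} [Semiring 𝕜] [PartialOrder 𝕜] [AddCommMonoid E]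
    [AddCommMonoid β] [PartialOrder β] [IsOrderedAddMonoid β] [SMul 𝕜 E] [Module 𝕜 β]
    {s : Set E} (hs : Convex 𝕜 s) {t : Finset ι} {f : ι → E → β}
    (hf : ∀ i ∈ t, ConcaveOn 𝕜 s (f i)) : ConcaveOn 𝕜 s fun x => ∑ i ∈ t, f i x := by
  classical
  induction t using Finset.induction_on with
  | empty => simpa using concaveOn_const (0 : β) hs
  | insert a t hat ih =>
    simp only [Finset.sum_insert hat]
    exact (hf a (Finset.mem_insert_self a t)).add
      (ih fun i hi => hf i (Finset.mem_insert_of_mem hi))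

theorem ConcaveOn.comp_apply_pi {𝕜 E β ι : Type*} [Semiring 𝕜] [PartialOrder 𝕜]
    [AddCommMonoid E] [Module 𝕜 E] [AddCommMonoid β] [PartialOrder β] [SMul 𝕜 β]
    {s : ι → Set E} (hs : Convex 𝕜 (univ.pi s)) {φ : E → β} {j : ι}
    (hφ : ConcaveOn 𝕜 (s j) φ) : ConcaveOn 𝕜 (univ.pi s) fun p => φ (p j) :=
  (hφ.comp_linearMap (LinearMap.proj (R := 𝕜) (φ := fun _ => E) j)).subset
    (fun _ hp => hp j (mem_univ j)) hs

theorem two_mul_inv_sub_mul_inv_pow_three_nonpos {A B t : ℝ} (hA : A ≤ -1) (hB : B ≤ 2)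
    (ht₀ : 0 ≤ t) (ht₁ : t ≤ 1) : 2 * A⁻¹ - t * B * A⁻¹ ^ 3 ≤ 0 := by
  set u := A⁻¹
  have hAu : A * u = 1 := mul_inv_cancel₀ (by linarith)
  have hu₀ : u < 0 := by nlinarith
  have hu₁ : -1 ≤ u := by nlinarith
  have hu₃ : 0 ≤ -u ^ 3 := by nlinarith [mul_nonneg (neg_nonneg.2 hu₀.le) (sq_nonneg u)]
  have htB : t * B ≤ 2 := by nlinarith [mul_nonneg (sub_nonneg.2 hB) ht₀]
  calc 2 * u - t * B * u ^ 3 = 2 * u + t * B * (-u ^ 3) := by ring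
    _ ≤ 2 * u + 2 * (-u ^ 3) := by gcongr
    _ = 2 * u * (1 - u ^ 2) := by ring
    _ ≤ 0 := mul_nonpos_of_nonpos_of_nonneg (by linarith) (by nlinarith)

theorem concaveOn_mul_sub_of_deriv_comp_eq {v g : ℝ → ℝ} {a b c : ℝ} (hv : ContDiff ℝ 3 v)
    (hv'' : ∀ k, iteratedDeriv 2 v k ≤ -1) (hv''' : ∀ k, iteratedDeriv 3 v k ≤ 2)
    (ha : a < c) (hb : c + 1 < b) (hg : ∀ p ∈ Ioo a b, DifferentiableAt ℝ g p)
    (hvg : ∀ p ∈ Ioo a b, deriv v (g p) = p) :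
    ConcaveOn ℝ (Icc c (c + 1)) fun p => g p * (p - c) := by
  set D₂ := iteratedDeriv 2 v
  set D₃ := iteratedDeriv 3 v
  have hD₂ : ∀ k, HasDerivAt (deriv v) (D₂ k) k := fun k => by
    rw [← iteratedDeriv_one, show D₂ = deriv (iteratedDeriv 1 v) from iteratedDeriv_succ]
    exact (hv.differentiable_iteratedDeriv 1 (by norm_num) k).hasDerivAt
  have hD₃ : ∀ k, HasDerivAt D₂ (D₃ k) k := fun k => by
    rw [show D₃ = deriv D₂ from iteratedDeriv_succ]
    exact (hv.differentiable_iteratedDeriv 2 (by norm_num) k).hasDerivAt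
  have hD₂_ne : ∀ k, D₂ k ≠ 0 := fun k => by linarith [hv'' k]
  have hg' : ∀ p ∈ Ioo a b, HasDerivAt g (D₂ (g p))⁻¹ p := fun p hp =>
    (hD₂ (g p)).of_local_left_inverse (hg p hp).continuousAt (hD₂_ne _)
      (eventually_of_mem (Ioo_mem_nhds hp.1 hp.2) hvg)
  have hIcc : Icc c (c + 1) ⊆ Ioo a b := Icc_subset_Ioo ha hb
  have hsub : Ioo c (c + 1) ⊆ Ioo a b := Ioo_subset_Icc_self.trans hIcc
  refine concaveOn_of_hasDerivWithinAt2_nonpos (convex_Icc _ _)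
    (f' := fun p => (D₂ (g p))⁻¹ * (p - c) + g p)
    (f'' := fun p => 2 * (D₂ (g p))⁻¹ - (p - c) * D₃ (g p) * (D₂ (g p))⁻¹ ^ 3)
    (fun p hp => (hg p (hIcc hp)).continuousAt.continuousWithinAt.mul
      (continuousWithinAt_id.sub continuousWithinAt_const)) ?_ ?_ ?_ <;>
    intro p hp <;> rw [interior_Icc] at hp
  · exact (((hg' p (hsub hp)).mul ((hasDerivAt_id p).sub_const c)).congr_deriv
      (by simp only [id]; ring)).hasDerivWithinAt
  · have hinv := ((hD₃ (g p)).comp p (hg' p (hsub hp))).inv (hD₂_ne (g p))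
    refine ((hinv.mul ((hasDerivAt_id p).sub_const c)).add (hg' p (hsub hp))).congr_deriv ?_
      |>.hasDerivWithinAt
    simp only [id, Function.comp_apply, Pi.inv_apply]
    field_simp
    ring
  · exact two_mul_inv_sub_mul_inv_pow_three_nonpos (hv'' _) (hv''' _)
      (by linarith [hp.1]) (by linarith [hp.2])

theorem expected_revenue_concave_general
    (n m : ℕ)
    (w : Fin n → ℝ) (hw : ∀ i, 0 ≤ w i)
    (c : Fin m → ℝ)
    (v : Fin n → Fin m → ℝ → ℝ) (hv : ∀ i j, ContDiff ℝ 3 (v i j))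
    (hv'' : ∀ i j (k : ℝ), iteratedDeriv 2 (v i j) k ≤ -1)
    (hv''' : ∀ i j (k : ℝ), iteratedDeriv 3 (v i j) k ≤ 2)
    (g : Fin n → Fin m → ℝ → ℝ)
    (hg : ∀ i j, ∃ a b : ℝ, a < c j ∧ c j + 1 < b ∧
      (∀ p ∈ Set.Ioo a b, DifferentiableAt ℝ (g i j) p) ∧
      (∀ p ∈ Set.Ioo a b, deriv (v i j) (g i j p) = p))
    (F : (Fin m → ℝ) → ℝ)
    (hF : F = fun p => ∑ j, ∑ i, w i * g i j (p j) * (p j - c j)) :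
    ConcaveOn ℝ (Set.univ.pi fun j => Set.Icc (c j) (c j + 1)) F := by
  have hbox : Convex ℝ (univ.pi fun j => Icc (c j) (c j + 1)) :=
    convex_pi fun j _ => convex_Icc _ _
  subst hF
  refine ConcaveOn.finset_sum hbox fun j _ => ConcaveOn.finset_sum hbox fun i _ => ?_
  obtain ⟨a, b, ha, hb, hgd, hvg⟩ := hg i j
  have hφ := concaveOn_mul_sub_of_deriv_comp_eq (hv i j) (hv'' i j) (hv''' i j) ha hb hgd hvg
  simpa only [smul_eq_mul, mul_assoc] using (hφ.smul (hw i)).comp_apply_pi hbox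

/-- The paper's Theorem 1: with `n` consumer types arriving with probabilities `w` and
`m` products with unit costs `c`, if each utility `v i j` is `C³` with `v'' ≤ -1` and
`v''' ≤ 2`, and each demand `g i j` is a differentiable local inverse of `(v i j)'` on
an open interval containing `[c j, c j + 1]`, then the expected revenue
`F p = ∑ j ∑ i, w i * g i j (p j) * (p j - c j)` is concave on the box
`∏ j [c j, c j + 1]`. -/
theorem expected_revenue_concave
    (n m : ℕ) (hn : 0 < n) (hm : 0 < m)
    (w : Fin n → ℝ) (hw : ∀ i, 0 ≤ w i) (hw1 : ∑ i, w i = 1)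
    (c : Fin m → ℝ)
    (v : Fin n → Fin m → ℝ → ℝ) (hv : ∀ i j, ContDiff ℝ 3 (v i j))
    (hv'' : ∀ i j (k : ℝ), iteratedDeriv 2 (v i j) k ≤ -1)
    (hv''' : ∀ i j (k : ℝ), iteratedDeriv 3 (v i j) k ≤ 2)
    (g : Fin n → Fin m → ℝ → ℝ)
    (hg : ∀ i j, ∃ a b : ℝ, a < c j ∧ c j + 1 < b ∧
      (∀ p ∈ Set.Ioo a b, DifferentiableAt ℝ (g i j) p) ∧
      (∀ p ∈ Set.Ioo a b, deriv (v i j) (g i j p) = p))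
    (F : (Fin m → ℝ) → ℝ)
    (hF : F = fun p => ∑ j, ∑ i, w i * g i j (p j) * (p j - c j)) :
    ConcaveOn ℝ (Set.univ.pi fun j => Set.Icc (c j) (c j + 1)) F :=
  expected_revenue_concave_general n m w hw c v hv hv'' hv''' g hg F hF
end

section
/- Let n, m be positive integers, w ∈ ℝⁿ a probability vector, c ∈ ℝᵐ, ε > 0 and M₁ ≥ 0. For each i ∈ {1,…,n} and j ∈ {1,…,m}, let v_{ij} : ℝ → ℝ be twice continuously differentiable and let g_{ij} be differentiable on an open interval containing [c_j, c_j + 1] with v_{ij}'(g_{ij}(p)) = p, 0 ≤ g_{ij}(p) ≤ M₁ and v_{ij}''(g_{ij}(p)) ≤ −ε for all p ∈ [c_j, c_j + 1]. Set F(p) = Σⱼ Σᵢ wᵢ · g_{ij}(p_j) · (p_j − c_j) and let p* maximize F over the box K = Πⱼ [c_j, c_j + 1]. Then with M = √m · (M₁ + 1/ε), for every p ∈ K one has F(p*) − F(p) ≤ M · ‖p − p*‖, where ‖·‖ is the Euclidean norm on ℝᵐ. -/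
/-!
Each product's revenue depends only on its own price. Differentiating `v'(g(p)) = p` gives
`g' = 1 / v''(g)`, so `|g'| ≤ 1/ε`, and the derivative `g'(p)(p - c) + g(p)` of the revenue
`g(p)(p - c)` is bounded by `M₁ + 1/ε` on the price interval. Averaging over consumer types keeps
this bound, so each coordinate of `F` is `(M₁ + 1/ε)`-Lipschitz, and the Cauchy–Schwarz bound
`‖x‖₁ ≤ √m ‖x‖₂` turns the coordinatewise estimate into the Euclidean one.
-/

open Finset Filter Topology Set

lemma abs_deriv_le_of_leftInverse {f g : ℝ → ℝ} {q D ε : ℝ} (hε : 0 < ε)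
    (hf : HasDerivAt f D (g q)) (hg : DifferentiableAt ℝ g q)
    (hfg : ∀ᶠ p in 𝓝 q, f (g p) = p) (hD : ε ≤ |D|) : |deriv g q| ≤ 1 / ε := by
  have hone : D * deriv g q = 1 :=
    ((hf.comp q hg.hasDerivAt).congr_of_eventuallyEq (hfg.mono fun _ h => h.symm)).unique
      (hasDerivAt_id q)
  have hD0 : 0 < |D| := hε.trans_le hD
  calc |deriv g q| = 1 / |D| := by
        rw [eq_div_iff hD0.ne', mul_comm, ← abs_mul, hone, abs_one]
    _ ≤ 1 / ε := one_div_le_one_div_of_le hε hD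

lemma abs_deriv_le_of_deriv_comp_eq {v g : ℝ → ℝ} {a b q ε : ℝ} (hε : 0 < ε)
    (hv : ContDiff ℝ 2 v) (hinv : ∀ p ∈ Ioo a b, deriv v (g p) = p) (hq : q ∈ Ioo a b)
    (hg : DifferentiableAt ℝ g q) (hreg : iteratedDeriv 2 v (g q) ≤ -ε) :
    |deriv g q| ≤ 1 / ε := by
  have hv' : HasDerivAt (deriv v) (iteratedDeriv 2 v (g q)) (g q) := by
    rw [iteratedDeriv_succ, iteratedDeriv_one]
    exact (hv.differentiable_deriv_two _).hasDerivAt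
  refine abs_deriv_le_of_leftInverse hε hv' hg ?_ ?_
  · filter_upwards [Ioo_mem_nhds hq.1 hq.2] with p hp using hinv p hp
  · rw [abs_of_neg (by linarith)]
    linarith

lemma abs_sum_mul_le_of_abs_le {ι : Type*} (s : Finset ι) {w x : ι → ℝ} {B : ℝ}
    (hw : ∀ i ∈ s, 0 ≤ w i) (hw1 : ∑ i ∈ s, w i = 1) (hx : ∀ i ∈ s, |x i| ≤ B) :
    |∑ i ∈ s, w i * x i| ≤ B :=
  calc |∑ i ∈ s, w i * x i| ≤ ∑ i ∈ s, w i * |x i| :=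
        (abs_sum_le_sum_abs _ _).trans_eq <|
          sum_congr rfl fun i hi => by rw [abs_mul, abs_of_nonneg (hw i hi)]
    _ ≤ ∑ i ∈ s, w i * B := sum_le_sum fun i hi => mul_le_mul_of_nonneg_left (hx i hi) (hw i hi)
    _ = B := by rw [← sum_mul, hw1, one_mul]

lemma abs_revenue_sub_le {ι : Type*} [Fintype ι] {w : ι → ℝ} (hw : ∀ i, 0 ≤ w i)
    (hw1 : ∑ i, w i = 1) {g : ι → ℝ → ℝ} {c M₁ B : ℝ}
    (hg : ∀ i, ∀ q ∈ Icc c (c + 1), DifferentiableAt ℝ (g i) q ∧ |deriv (g i) q| ≤ B)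
    (hgbound : ∀ i, ∀ q ∈ Icc c (c + 1), |g i q| ≤ M₁) {x y : ℝ}
    (hx : x ∈ Icc c (c + 1)) (hy : y ∈ Icc c (c + 1)) :
    |∑ i, w i * g i x * (x - c) - ∑ i, w i * g i y * (y - c)| ≤ (M₁ + B) * |x - y| := by
  have hderiv : ∀ q ∈ Icc c (c + 1), HasDerivWithinAt (fun q => ∑ i, w i * g i q * (q - c))
      (∑ i, w i * (deriv (g i) q * (q - c) + g i q)) (Icc c (c + 1)) q := by
    intro q hq
    refine (HasDerivAt.fun_sum fun i _ =>
      (((hg i q hq).1.hasDerivAt.const_mul (w i)).mul ((hasDerivAt_id q).sub_const c))).congr_deriv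
        (sum_congr rfl fun i _ => by simp only [id_eq]; ring) |>.hasDerivWithinAt
  have hbound : ∀ q ∈ Icc c (c + 1), ‖∑ i, w i * (deriv (g i) q * (q - c) + g i q)‖ ≤ M₁ + B := by
    intro q hq
    refine abs_sum_mul_le_of_abs_le _ (fun i _ => hw i) hw1 fun i _ => ?_
    have hqc : |q - c| ≤ 1 := abs_le.2 ⟨by linarith [hq.1], by linarith [hq.2]⟩
    calc |deriv (g i) q * (q - c) + g i q| ≤ |deriv (g i) q| * |q - c| + |g i q| := by
          rw [← abs_mul]; exact abs_add_le _ _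
      _ ≤ B * 1 + M₁ := by
          gcongr
          · exact (abs_nonneg _).trans (hg i q hq).2
          · exact (hg i q hq).2
          · exact hgbound i q hq
      _ = M₁ + B := by ring
  simpa only [Real.norm_eq_abs] using
    (convex_Icc c (c + 1)).norm_image_sub_le_of_norm_hasDerivWithin_le hderiv hbound hy hx

lemma EuclideanSpace.sum_abs_le_sqrt_card_mul_norm {ι : Type*} [Fintype ι]
    (x : EuclideanSpace ℝ ι) : ∑ i, |x i| ≤ √(Fintype.card ι) * ‖x‖ := by
  rw [EuclideanSpace.norm_eq, ← Real.sqrt_mul (Nat.cast_nonneg _)]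
  refine Real.le_sqrt_of_sq_le ?_
  simpa only [card_univ, Real.norm_eq_abs, sq_abs] using
    sq_sum_le_card_mul_sum_sq (s := univ) (f := fun i => |x i|)

theorem revenue_loss_lipschitz_general
    (n m : ℕ)
    (w : Fin n → ℝ) (hw : ∀ i, 0 ≤ w i) (hw1 : ∑ i, w i = 1)
    (c : Fin m → ℝ) (ε M₁ : ℝ) (hε : 0 < ε) (hM₁ : 0 ≤ M₁)
    (v : Fin n → Fin m → ℝ → ℝ) (hv : ∀ i j, ContDiff ℝ 2 (v i j))
    (g : Fin n → Fin m → ℝ → ℝ)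
    (hg : ∀ i j, ∃ a b : ℝ, a < c j ∧ c j + 1 < b ∧
      (∀ p ∈ Set.Ioo a b, DifferentiableAt ℝ (g i j) p) ∧
      (∀ p ∈ Set.Ioo a b, deriv (v i j) (g i j p) = p))
    (hgbound : ∀ i j, ∀ p ∈ Set.Icc (c j) (c j + 1), 0 ≤ g i j p ∧ g i j p ≤ M₁)
    (hreg : ∀ i j, ∀ p ∈ Set.Icc (c j) (c j + 1),
      iteratedDeriv 2 (v i j) (g i j p) ≤ -ε)
    (F : EuclideanSpace ℝ (Fin m) → ℝ)
    (hF : F = fun p => ∑ j, ∑ i, w i * g i j (p j) * (p j - c j))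
    (K : Set (EuclideanSpace ℝ (Fin m)))
    (hK : K = {p : EuclideanSpace ℝ (Fin m) | ∀ j, p j ∈ Set.Icc (c j) (c j + 1)})
    (pstar : EuclideanSpace ℝ (Fin m)) (hpstar : pstar ∈ K)
    (M : ℝ) (hM : M = Real.sqrt m * (M₁ + 1 / ε)) :
    ∀ p ∈ K, F pstar - F p ≤ M * ‖p - pstar‖ := by
  subst hF hK hM
  intro p hp
  have hdemand : ∀ i j, ∀ q ∈ Icc (c j) (c j + 1),
      DifferentiableAt ℝ (g i j) q ∧ |deriv (g i j) q| ≤ 1 / ε := by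
    intro i j q hq
    obtain ⟨a, b, ha, hb, hdiff, hinv⟩ := hg i j
    have hqab : q ∈ Ioo a b := ⟨ha.trans_le hq.1, hq.2.trans_lt hb⟩
    exact ⟨hdiff q hqab,
      abs_deriv_le_of_deriv_comp_eq hε (hv i j) hinv hqab (hdiff q hqab) (hreg i j q hq)⟩
  have hloss : ∀ j, |∑ i, w i * g i j (pstar j) * (pstar j - c j) -
      ∑ i, w i * g i j (p j) * (p j - c j)| ≤ (M₁ + 1 / ε) * |(p - pstar) j| := fun j => by
    rw [PiLp.sub_apply, abs_sub_comm (p j)]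
    exact abs_revenue_sub_le hw hw1 (fun i => hdemand i j)
      (fun i q hq => abs_le.2 ⟨by linarith [(hgbound i j q hq).1], (hgbound i j q hq).2⟩)
      (hpstar j) (hp j)
  calc ∑ j, ∑ i, w i * g i j (pstar j) * (pstar j - c j) -
        ∑ j, ∑ i, w i * g i j (p j) * (p j - c j)
      ≤ ∑ j, (M₁ + 1 / ε) * |(p - pstar) j| := by
        rw [← sum_sub_distrib]
        exact sum_le_sum fun j _ => (le_abs_self _).trans (hloss j)
    _ ≤ (M₁ + 1 / ε) * (√m * ‖p - pstar‖) := by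
        rw [← mul_sum]
        gcongr
        simpa using EuclideanSpace.sum_abs_le_sqrt_card_mul_norm (p - pstar)
    _ = √m * (M₁ + 1 / ε) * ‖p - pstar‖ := by ring

/-- Deterministic form of the paper's Proposition 3.2: the revenue loss from using a
sub-optimal price `p` instead of the optimal price `p*` is at most
`√m * (M₁ + 1/ε) * ‖p - p*‖` (Euclidean norm). -/
theorem revenue_loss_lipschitz
    (n m : ℕ) (hn : 0 < n) (hm : 0 < m)
    (w : Fin n → ℝ) (hw : ∀ i, 0 ≤ w i) (hw1 : ∑ i, w i = 1)
    (c : Fin m → ℝ) (ε M₁ : ℝ) (hε : 0 < ε) (hM₁ : 0 ≤ M₁)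
    (v : Fin n → Fin m → ℝ → ℝ) (hv : ∀ i j, ContDiff ℝ 2 (v i j))
    (g : Fin n → Fin m → ℝ → ℝ)
    (hg : ∀ i j, ∃ a b : ℝ, a < c j ∧ c j + 1 < b ∧
      (∀ p ∈ Set.Ioo a b, DifferentiableAt ℝ (g i j) p) ∧
      (∀ p ∈ Set.Ioo a b, deriv (v i j) (g i j p) = p))
    (hgbound : ∀ i j, ∀ p ∈ Set.Icc (c j) (c j + 1), 0 ≤ g i j p ∧ g i j p ≤ M₁)
    (hreg : ∀ i j, ∀ p ∈ Set.Icc (c j) (c j + 1),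
      iteratedDeriv 2 (v i j) (g i j p) ≤ -ε)
    (F : EuclideanSpace ℝ (Fin m) → ℝ)
    (hF : F = fun p => ∑ j, ∑ i, w i * g i j (p j) * (p j - c j))
    (K : Set (EuclideanSpace ℝ (Fin m)))
    (hK : K = {p : EuclideanSpace ℝ (Fin m) | ∀ j, p j ∈ Set.Icc (c j) (c j + 1)})
    (pstar : EuclideanSpace ℝ (Fin m)) (hpstar : pstar ∈ K)
    (hmax : ∀ p ∈ K, F p ≤ F pstar)
    (M : ℝ) (hM : M = Real.sqrt m * (M₁ + 1 / ε)) :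
    ∀ p ∈ K, F pstar - F p ≤ M * ‖p - pstar‖ :=
  revenue_loss_lipschitz_general n m w hw hw1 c ε M₁ hε hM₁ v hv g hg hgbound hreg F hF K hK pstar
    hpstar M hM
end

section
/- Let n be a positive integer, w, ŵ ∈ ℝⁿ probability vectors, K ⊆ ℝᵐ a nonempty compact set, M, M' ≥ 0, and h₁,…,hₙ : K → ℝ continuous with 0 ≤ hᵢ(p) ≤ M' and hᵢ M-Lipschitz on K (with respect to the Euclidean norm) for every i. Write r_w(p) = Σᵢ wᵢ·hᵢ(p) and r_ŵ(p) = Σᵢ ŵᵢ·hᵢ(p), and let p̂* ∈ K be a maximizer of r_ŵ over K. Then for every p ∈ K: (sup_{q ∈ K} r_w(q)) − r_w(p) ≤ M·‖p − p̂*‖ + 2·M'·d_TV(w, ŵ), where d_TV(w, ŵ) = ½ Σᵢ |wᵢ − ŵᵢ|. -/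
/-- Per-period deterministic core of the paper's Theorem 3.3: the per-period regret
decomposes into the price-approximation error `M * ‖p - p̂*‖` and the
distribution-approximation error `2 * M' * d_TV(w, wh)`. -/
theorem per_period_regret_decomposition
    (n m : ℕ) (hn : 0 < n)
    (w wh : Fin n → ℝ)
    (hw : ∀ i, 0 ≤ w i) (hw1 : ∑ i, w i = 1)
    (hwh : ∀ i, 0 ≤ wh i) (hwh1 : ∑ i, wh i = 1)
    (K : Set (EuclideanSpace ℝ (Fin m))) (hKne : K.Nonempty) (hKcpt : IsCompact K)
    (M M' : ℝ) (hM : 0 ≤ M) (hM' : 0 ≤ M')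
    (h : Fin n → EuclideanSpace ℝ (Fin m) → ℝ)
    (hcont : ∀ i, ContinuousOn (h i) K)
    (hrange : ∀ i, ∀ p ∈ K, 0 ≤ h i p ∧ h i p ≤ M')
    (hlip : ∀ i, LipschitzOnWith (Real.toNNReal M) (h i) K)
    (r_w rwh : EuclideanSpace ℝ (Fin m) → ℝ)
    (hrw : r_w = fun p => ∑ i, w i * h i p)
    (hrwh : rwh = fun p => ∑ i, wh i * h i p)
    (phat : EuclideanSpace ℝ (Fin m)) (hphat : phat ∈ K)
    (hmax : ∀ q ∈ K, rwh q ≤ rwh phat) :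
    ∀ p ∈ K,
      sSup (r_w '' K) - r_w p ≤
        M * ‖p - phat‖ + 2 * M' * ((1 / 2) * ∑ i, |w i - wh i|) := by
  subst hrw hrwh
  intro p hp
  have hcw : ContinuousOn (fun q => ∑ i, w i * h i q) K :=
    continuousOn_finset_sum _ fun i _ => continuousOn_const.mul (hcont i)
  obtain ⟨ps, hps, hsup⟩ := hKcpt.exists_sSup_image_eq hKne hcw
  rw [hsup]
  -- distribution error
  have key1 : ∑ i, (w i - wh i) * (h i ps - h i p) ≤ ∑ i, |w i - wh i| * M' := by
    refine Finset.sum_le_sum fun i _ => ?_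
    have h1 := hrange i ps hps
    have h2 := hrange i p hp
    have habs : |h i ps - h i p| ≤ M' := by
      rw [abs_sub_le_iff]; constructor <;> linarith [h1.1, h1.2, h2.1, h2.2]
    calc (w i - wh i) * (h i ps - h i p) ≤ |(w i - wh i) * (h i ps - h i p)| :=
          le_abs_self _
      _ = |w i - wh i| * |h i ps - h i p| := abs_mul _ _
      _ ≤ |w i - wh i| * M' := by
          exact mul_le_mul_of_nonneg_left habs (abs_nonneg _)
  -- Lipschitz error
  have key2 : ∀ i : Fin n, h i phat - h i p ≤ M * ‖p - phat‖ := by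
    intro i
    have := (hlip i).dist_le_mul phat hphat p hp
    rw [Real.coe_toNNReal M hM] at this
    have hd : dist (h i phat) (h i p) = |h i phat - h i p| := Real.dist_eq _ _
    calc h i phat - h i p ≤ |h i phat - h i p| := le_abs_self _
      _ ≤ M * dist phat p := hd ▸ this
      _ = M * ‖p - phat‖ := by rw [dist_eq_norm, norm_sub_rev]
  have key3 : ∑ i, wh i * h i phat - ∑ i, wh i * h i p ≤ M * ‖p - phat‖ := by
    rw [← Finset.sum_sub_distrib]
    calc ∑ i, (wh i * h i phat - wh i * h i p)
        = ∑ i, wh i * (h i phat - h i p) := by simp [mul_sub]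
      _ ≤ ∑ i, wh i * (M * ‖p - phat‖) := by
          refine Finset.sum_le_sum fun i _ => mul_le_mul_of_nonneg_left (key2 i) (hwh i)
      _ = M * ‖p - phat‖ := by rw [← Finset.sum_mul, hwh1, one_mul]
  have hmaxps : ∑ i, wh i * h i ps ≤ ∑ i, wh i * h i phat := hmax ps hps
  have alg : (∑ i, w i * h i ps) - ∑ i, w i * h i p =
      ((∑ i, wh i * h i ps) - ∑ i, wh i * h i p) +
        ∑ i, (w i - wh i) * (h i ps - h i p) := by
    simp only [sub_mul, mul_sub, Finset.sum_sub_distrib]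
    ring
  have hrhs : 2 * M' * ((1 / 2) * ∑ i, |w i - wh i|) = ∑ i, |w i - wh i| * M' := by
    rw [← Finset.sum_mul]; ring
  rw [hrhs]
  linarith
end

section
/- Let n be a positive integer, w ∈ ℝⁿ a probability vector, K ⊆ ℝᵐ a nonempty compact set, M, M' ≥ 0, and h₁,…,hₙ : K → ℝ continuous with 0 ≤ hᵢ(p) ≤ M' and hᵢ M-Lipschitz on K for every i; set r_w(p) = Σᵢ wᵢ·hᵢ(p). Let T be a positive integer and, for each t ∈ {1,…,T}, let ŵ_t ∈ ℝⁿ be a probability vector, let p(t)* ∈ K maximize r_{ŵ_t}(p) = Σᵢ (ŵ_t)ᵢ·hᵢ(p) over K, and let p(t) ∈ K. Then the cumulative regret satisfies T·(sup_{q ∈ K} r_w(q)) − Σ_{t=1}^{T} r_w(p(t)) ≤ Σ_{t=1}^{T} ( M·‖p(t) − p(t)*‖ + 2·M'·d_TV(w, ŵ_t) ), where d_TV(w, ŵ) = ½ Σᵢ |wᵢ − ŵᵢ|. -/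
/-- Deterministic form of the paper's Theorem 3.3: the cumulative regret of a pricing
policy `p : Fin T → K` is bounded by the sum over periods of the price-approximation
error `M * ‖p t - p* t‖` plus the distribution-approximation error
`2 * M' * d_TV(w, wh t)`. -/
theorem cumulative_regret_bound
    (n m : ℕ) (hn : 0 < n)
    (w : Fin n → ℝ) (hw : ∀ i, 0 ≤ w i) (hw1 : ∑ i, w i = 1)
    (K : Set (EuclideanSpace ℝ (Fin m))) (hKne : K.Nonempty) (hKcpt : IsCompact K)
    (M M' : ℝ) (hM : 0 ≤ M) (hM' : 0 ≤ M')
    (h : Fin n → EuclideanSpace ℝ (Fin m) → ℝ)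
    (hcont : ∀ i, ContinuousOn (h i) K)
    (hrange : ∀ i, ∀ p ∈ K, 0 ≤ h i p ∧ h i p ≤ M')
    (hlip : ∀ i, LipschitzOnWith (Real.toNNReal M) (h i) K)
    (r_w : EuclideanSpace ℝ (Fin m) → ℝ)
    (hrw : r_w = fun p => ∑ i, w i * h i p)
    (T : ℕ) (hT : 0 < T)
    (wh : Fin T → Fin n → ℝ)
    (hwh : ∀ t i, 0 ≤ wh t i) (hwh1 : ∀ t, ∑ i, wh t i = 1)
    (pstar : Fin T → EuclideanSpace ℝ (Fin m))
    (hpstarK : ∀ t, pstar t ∈ K)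
    (hpstarMax : ∀ t, ∀ q ∈ K, ∑ i, wh t i * h i q ≤ ∑ i, wh t i * h i (pstar t))
    (p : Fin T → EuclideanSpace ℝ (Fin m)) (hp : ∀ t, p t ∈ K) :
    (T : ℝ) * sSup (r_w '' K) - ∑ t, r_w (p t) ≤
      ∑ t, (M * ‖p t - pstar t‖ + 2 * M' * ((1 / 2) * ∑ i, |w i - wh t i|)) := by
  subst hrw
  -- one-sided total-variation bound
  have hA : ∀ (u v : Fin n → ℝ), (∀ i, 0 ≤ v i) →
      ∑ i, u i = 1 → ∑ i, v i = 1 → ∀ q ∈ K,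
      ∑ i, u i * h i q - ∑ i, v i * h i q ≤ M' * ((1/2) * ∑ i, |u i - v i|) := by
    intro u v hv hu1 hv1 q hq
    have h1 : ∑ i, u i * h i q - ∑ i, v i * h i q = ∑ i, (u i - v i) * h i q := by
      rw [← Finset.sum_sub_distrib]
      exact Finset.sum_congr rfl fun i _ => by ring
    rw [h1]
    have h2 : ∀ i ∈ Finset.univ, (u i - v i) * h i q ≤ max (u i - v i) 0 * M' := by
      intro i _
      rcases le_or_gt (v i) (u i) with hle | hlt
      · have hub := (hrange i q hq).2
        have h0 : 0 ≤ u i - v i := by linarith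
        rw [max_eq_left h0]
        exact mul_le_mul_of_nonneg_left hub h0
      · have hlb := (hrange i q hq).1
        rw [max_eq_right (by linarith : u i - v i ≤ 0)]
        nlinarith
    have hmax : ∀ i : Fin n, max (u i - v i) 0 = (1/2) * ((u i - v i) + |u i - v i|) := by
      intro i
      rcases abs_cases (u i - v i) with ⟨ha, ha'⟩ | ⟨ha, ha'⟩
      · rw [ha, max_eq_left ha']; ring
      · rw [ha, max_eq_right ha'.le]; ring
    calc ∑ i, (u i - v i) * h i q ≤ ∑ i, max (u i - v i) 0 * M' :=
          Finset.sum_le_sum h2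
      _ = (∑ i, max (u i - v i) 0) * M' := by rw [Finset.sum_mul]
      _ = ((1/2) * ∑ i, |u i - v i|) * M' := by
          congr 1
          simp_rw [hmax]
          rw [← Finset.mul_sum, Finset.sum_add_distrib, Finset.sum_sub_distrib, hu1, hv1]
          ring
      _ = M' * ((1/2) * ∑ i, |u i - v i|) := by ring
  have key : ∀ t : Fin T,
      sSup ((fun q => ∑ i, w i * h i q) '' K) - ∑ i, w i * h i (p t)
      ≤ M * ‖p t - pstar t‖ + 2 * M' * ((1/2) * ∑ i, |w i - wh t i|) := by
    intro t
    set TV : ℝ := (1/2) * ∑ i, |w i - wh t i| with hTV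
    -- sup bound
    have hsup : sSup ((fun q => ∑ i, w i * h i q) '' K)
        ≤ ∑ i, wh t i * h i (pstar t) + M' * TV := by
      apply Real.sSup_le
      · rintro y ⟨q, hq, rfl⟩
        have h1 := hA w (wh t) (hwh t) hw1 (hwh1 t) q hq
        have h2 := hpstarMax t q hq
        show ∑ i, w i * h i q ≤ _
        rw [hTV]
        linarith
      · have h1 := hA w (wh t) (hwh t) hw1 (hwh1 t) (pstar t) (hpstarK t)
        have h3 : 0 ≤ ∑ i, wh t i * h i (pstar t) :=
          Finset.sum_nonneg fun i _ =>
            mul_nonneg (hwh t i) (hrange i (pstar t) (hpstarK t)).1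
        have hTVnn : 0 ≤ TV := by
          rw [hTV]
          positivity
        nlinarith
    -- Lipschitz bound on r_wh
    have hLipr : ∑ i, wh t i * h i (pstar t) - ∑ i, wh t i * h i (p t)
        ≤ M * ‖p t - pstar t‖ := by
      have hterm : ∀ i ∈ Finset.univ,
          wh t i * h i (pstar t) - wh t i * h i (p t)
          ≤ wh t i * (M * ‖p t - pstar t‖) := by
        intro i _
        have hd := (hlip i).dist_le_mul (pstar t) (hpstarK t) (p t) (hp t)
        rw [Real.coe_toNNReal M hM, Real.dist_eq, dist_eq_norm, norm_sub_rev] at hd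
        have habs : h i (pstar t) - h i (p t) ≤ M * ‖p t - pstar t‖ :=
          le_trans (le_abs_self _) hd
        nlinarith [hwh t i, habs]
      calc ∑ i, wh t i * h i (pstar t) - ∑ i, wh t i * h i (p t)
          = ∑ i, (wh t i * h i (pstar t) - wh t i * h i (p t)) := by
            rw [Finset.sum_sub_distrib]
        _ ≤ ∑ i, wh t i * (M * ‖p t - pstar t‖) := Finset.sum_le_sum hterm
        _ = M * ‖p t - pstar t‖ := by
            rw [← Finset.sum_mul, hwh1 t, one_mul]
    -- TV bound at p t
    have hTVp : ∑ i, wh t i * h i (p t) - ∑ i, w i * h i (p t) ≤ M' * TV := by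
      have h1 := hA (wh t) w hw (hwh1 t) hw1 (p t) (hp t)
      simp_rw [abs_sub_comm (wh t _)] at h1
      rw [hTV]
      exact h1
    have : 2 * M' * TV = M' * TV + M' * TV := by ring
    linarith
  calc (T : ℝ) * sSup ((fun p => ∑ i, w i * h i p) '' K) - ∑ t, (fun p => ∑ i, w i * h i p) (p t)
      = ∑ t : Fin T, (sSup ((fun q => ∑ i, w i * h i q) '' K) - ∑ i, w i * h i (p t)) := by
        rw [Finset.sum_sub_distrib, Finset.sum_const, Finset.card_univ, Fintype.card_fin,
          nsmul_eq_mul]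
    _ ≤ ∑ t, (M * ‖p t - pstar t‖ + 2 * M' * ((1/2) * ∑ i, |w i - wh t i|)) :=
        Finset.sum_le_sum fun t _ => key t
end

section
/- For every D > 0 there exist a constant c > 0 and a threshold T₀ ≥ 3 such that for all real T ≥ T₀ and every real t with 1 ≤ t ≤ T/2: t + ((T − t)/√(2t))·exp(−t·D) ≥ c·√(log T). -/
/-- Exploration–exploitation tradeoff underlying the paper's Theorem 6.1: for every
`D > 0` there are `c > 0` and a threshold `T₀ ≥ 3` so that for all `T ≥ T₀` and all
learning lengths `t` with `1 ≤ t ≤ T/2`, the regret bound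
`t + ((T - t)/√(2t)) * exp (-t * D)` is at least `c * √(log T)`. -/
theorem exploration_exploitation_lower_bound
    (D : ℝ) (hD : 0 < D) :
    ∃ c > (0 : ℝ), ∃ T₀ : ℝ, 3 ≤ T₀ ∧
      ∀ T : ℝ, T₀ ≤ T → ∀ t : ℝ, 1 ≤ t → t ≤ T / 2 →
        c * Real.sqrt (Real.log T) ≤
          t + (T - t) / Real.sqrt (2 * t) * Real.exp (-t * D) := by
  refine ⟨1, one_pos, max 3 (Real.exp ((D+4)^2)), le_max_left _ _, ?_⟩
  intro T hT t ht htT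
  rw [one_mul]
  set L := Real.log T with hL
  have hT3 : (3:ℝ) ≤ T := le_trans (le_max_left _ _) hT
  have hTexp : Real.exp ((D+4)^2) ≤ T := le_trans (le_max_right _ _) hT
  have hT0 : (0:ℝ) < T := by linarith
  have hLge : (D+4)^2 ≤ L := by
    rw [hL, ← Real.log_exp ((D+4)^2)]
    exact Real.log_le_log (Real.exp_pos _) hTexp
  have hD4 : (4:ℝ) ≤ D + 4 := by linarith
  have hL16 : (16:ℝ) ≤ L := le_trans (by nlinarith) hLge
  set s := Real.sqrt L with hs
  have hs0 : 0 ≤ s := Real.sqrt_nonneg _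
  have hsge : D + 4 ≤ s := by
    rw [hs]
    have h := Real.sqrt_le_sqrt hLge
    rwa [Real.sqrt_sq (by linarith : (0:ℝ) ≤ D + 4)] at h
  have hs4 : (4:ℝ) ≤ s := le_trans hD4 hsge
  have hs2 : s^2 = L := Real.sq_sqrt (by linarith)
  rcases le_or_gt s t with hcase | hcase
  · -- exploration term dominates
    have hpos : 0 ≤ (T - t) / Real.sqrt (2 * t) * Real.exp (-t * D) := by
      apply mul_nonneg
      · apply div_nonneg (by linarith) (Real.sqrt_nonneg _)
      · exact (Real.exp_pos _).le
    linarith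
  · -- exploitation term dominates
    have ht0 : (0:ℝ) < t := by linarith
    have hsqpos : 0 < Real.sqrt (2 * t) := Real.sqrt_pos.mpr (by linarith)
    have hsqpos' : 0 < Real.sqrt (2 * s) := Real.sqrt_pos.mpr (by linarith)
    have hsq : Real.sqrt (2 * t) ≤ Real.sqrt (2 * s) :=
      Real.sqrt_le_sqrt (by linarith)
    have hexp : Real.exp (-s * D) ≤ Real.exp (-t * D) :=
      Real.exp_le_exp.mpr (by nlinarith)
    have hLpos : (0:ℝ) < L := by linarith
    -- key size estimate : 2 s √(2s) exp(sD) ≤ T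
    have key : 2 * s * Real.sqrt (2*s) * Real.exp (s * D) ≤ T := by
      have hlogL : Real.log L ≤ 2 * s := by
        have h1 : Real.log s ≤ s - 1 := Real.log_le_sub_one_of_pos (by linarith)
        have h2 : Real.log L = 2 * Real.log s := by
          rw [hs, Real.log_sqrt (by linarith)]; ring
        linarith
      have hLbig : 2 + Real.log L + s * D ≤ L := by nlinarith
      have hsqs : Real.sqrt (2*s) ≤ s := by
        have h := Real.sqrt_le_sqrt (show 2*s ≤ s^2 by nlinarith)
        rwa [Real.sqrt_sq hs0] at h
      have he2 : (2:ℝ) ≤ Real.exp 2 := by nlinarith [Real.add_one_le_exp (2:ℝ)]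
      have hexps : (0:ℝ) < Real.exp (s*D) := Real.exp_pos _
      have step : 2 * s * Real.sqrt (2*s) * Real.exp (s*D) ≤
          Real.exp (2 + Real.log L + s * D) := by
        rw [Real.exp_add, Real.exp_add, Real.exp_log hLpos]
        have h1 : 2 * s * Real.sqrt (2*s) ≤ 2 * L := by nlinarith
        have h2 : 2 * L ≤ Real.exp 2 * L := by nlinarith
        exact mul_le_mul_of_nonneg_right (le_trans h1 h2) hexps.le
      calc 2 * s * Real.sqrt (2*s) * Real.exp (s*D) ≤
            Real.exp (2 + Real.log L + s * D) := step
        _ ≤ Real.exp L := Real.exp_le_exp.mpr hLbig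
        _ = T := Real.exp_log hT0
    -- from key : s ≤ (T/2)/√(2s) * exp(-s D)
    have hmain : s ≤ T / 2 / Real.sqrt (2*s) * Real.exp (-s * D) := by
      rw [div_mul_eq_mul_div, le_div_iff₀ hsqpos']
      have h1 : s * Real.sqrt (2*s) * Real.exp (s*D) ≤ T / 2 := by linarith
      calc s * Real.sqrt (2*s)
          = s * Real.sqrt (2*s) * Real.exp (s*D) * Real.exp (-s * D) := by
            rw [mul_assoc, ← Real.exp_add]; simp
        _ ≤ T / 2 * Real.exp (-s * D) :=
            mul_le_mul_of_nonneg_right h1 (Real.exp_pos _).le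
    -- compare the two exploitation terms
    have hcomp : T / 2 / Real.sqrt (2*s) * Real.exp (-s * D) ≤
        (T - t) / Real.sqrt (2 * t) * Real.exp (-t * D) := by
      apply mul_le_mul _ hexp (Real.exp_pos _).le
        (div_nonneg (by linarith) hsqpos.le)
      exact div_le_div₀ (by linarith) (by linarith) hsqpos hsq
    calc s ≤ T / 2 / Real.sqrt (2*s) * Real.exp (-s * D) := hmain
      _ ≤ (T - t) / Real.sqrt (2 * t) * Real.exp (-t * D) := hcomp
      _ ≤ t + (T - t) / Real.sqrt (2 * t) * Real.exp (-t * D) :=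
          le_add_of_nonneg_left ht0.le
end
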